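/- The proper 8-colouring β of G₁₆ is frozen: for every vertex v of G₁₆ and every colour c ∈ Fin 8, there exists a vertex u with u = v or u adjacent to v in G₁₆ such that β(u) = c. -/

import Mathlib

/-!
The colour classes of `β16` are the antipodal pairs `{i, i + 8}`. Two antipodal vertices are at
circular distance `8` and share their `β16`-colour, so they are never adjacent: `β16` is proper.
Every vertex is within circular distance `4` of one of the two points of an antipodal pair, so
every colour class meets every closed neighbourhood.
-/

/-- The 7-colouring `α` of the 16 vertices, given by the sequence
`1,2,3,4,5,7,2,3,4,5,1,2,3,4,6,7` at positions `0,…,15`. -/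
def α16 : ZMod 16 → Fin 7 :=
  fun i => ![1, 2, 3, 4, 5, 7, 2, 3, 4, 5, 1, 2, 3, 4, 6, 7] ⟨i.val, ZMod.val_lt i⟩

/-- The 8-colouring `β` given by `β i = i mod 8`. -/
def β16 : ZMod 16 → Fin 8 := fun i => Fin.ofNat 8 i.val

/-- The graph `G₁₆` on `ZMod 16`: `i` is adjacent to `j` iff `i ≠ j` and either the circular
distance between `i` and `j` is at most `4`, or both `α16 i ≠ α16 j` and `β16 i ≠ β16 j`. -/
def G16 : SimpleGraph (ZMod 16) where
  Adj i j := i ≠ j ∧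
    (min (i - j).val (j - i).val ≤ 4 ∨ (α16 i ≠ α16 j ∧ β16 i ≠ β16 j))
  symm := by
    constructor
    rintro i j ⟨h1, h2⟩
    refine ⟨h1.symm, ?_⟩
    rcases h2 with h | ⟨ha, hb⟩
    · exact Or.inl (by rwa [min_comm])
    · exact Or.inr ⟨ha.symm, hb.symm⟩
  loopless := ⟨fun i h => h.1 rfl⟩

theorem β16_eq_iff (i j : ZMod 16) : β16 i = β16 j ↔ j = i ∨ j = i + 8 := by
  revert i j
  decide

theorem β16_natCast (c : Fin 8) : β16 (c.val : ZMod 16) = c := by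
  revert c
  decide

theorem β16_add_eight (i : ZMod 16) : β16 (i + 8) = β16 i :=
  ((β16_eq_iff i (i + 8)).2 (Or.inr rfl)).symm

theorem not_G16_adj_add_eight (i : ZMod 16) : ¬G16.Adj i (i + 8) := by
  rintro ⟨-, hdist | ⟨-, hβ⟩⟩
  · have h8 : min (i - (i + 8)).val (i + 8 - i).val = 8 := by
      rw [sub_add_cancel_left, add_sub_cancel_left]
      decide
    omega
  · exact hβ (β16_add_eight i).symm

theorem dist_le_four_or_antipode (v w : ZMod 16) :
    min (w - v).val (v - w).val ≤ 4 ∨ min (w + 8 - v).val (v - (w + 8)).val ≤ 4 := by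
  obtain ⟨d, rfl⟩ : ∃ d, w = v + d := ⟨w - v, by ring⟩
  have hw : v + d + 8 = v + (d + 8) := by ring
  rw [hw, add_sub_cancel_left, add_sub_cancel_left, sub_add_cancel_left, sub_add_cancel_left]
  clear hw
  revert d
  decide

theorem β16_proper (i j : ZMod 16) (hadj : G16.Adj i j) : β16 i ≠ β16 j := by
  intro hβ
  rcases (β16_eq_iff i j).1 hβ with rfl | rfl
  · exact hadj.ne rfl
  · exact not_G16_adj_add_eight i hadj

theorem β16_mem_closedNeighbourhood (v : ZMod 16) (c : Fin 8) :
    ∃ u : ZMod 16, (u = v ∨ G16.Adj u v) ∧ β16 u = c := by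
  by_cases hv : β16 v = c
  · exact ⟨v, Or.inl rfl, hv⟩
  have hne {u : ZMod 16} (hu : β16 u = c) : u ≠ v := by
    rintro rfl
    exact hv hu
  have hc := β16_natCast c
  have hc8 : β16 ((c.val : ZMod 16) + 8) = c := (β16_add_eight _).trans hc
  rcases dist_le_four_or_antipode v (c.val : ZMod 16) with hdist | hdist
  · exact ⟨_, Or.inr ⟨hne hc, Or.inl hdist⟩, hc⟩
  · exact ⟨_, Or.inr ⟨hne hc8, Or.inl hdist⟩, hc8⟩

theorem statement3 :
    (∀ i j : ZMod 16, G16.Adj i j → β16 i ≠ β16 j) ∧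
    (∀ (v : ZMod 16) (c : Fin 8), ∃ u : ZMod 16, (u = v ∨ G16.Adj u v) ∧ β16 u = c) :=
  ⟨β16_proper, β16_mem_closedNeighbourhood⟩
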